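/- If σ ∈ C^n(G,A) is invariant under the action of Σ_{n+1}, then ∂σ ∈ C^{n+1}(G,A) is invariant under the action of Σ_{n+2}. Hence the symmetric cochains CS^n(G,A) = (C^n(G,A))^{Σ_{n+1}} form a subcomplex of the standard group cohomology cochain complex. -/

import Mathlib

/-!
Write `τⱼ = Tact _ j` and `dᵏ = dmap _ k`. The face maps satisfy the relations
`τⱼ dʲ = -dʲ⁺¹`, `τⱼ dʲ⁺¹ = -dʲ`, `τⱼ dᵏ = dᵏ τⱼ₋₁` for `k < j`, and `τⱼ dᵏ = dᵏ τⱼ`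
for `k > j + 1`.
So if `σ` is fixed by every `τ`, then `τⱼ` fixes each term `(-1)ᵏ dᵏ σ` of `∂σ` with
`k ∉ {j, j + 1}` and exchanges the remaining two: it permutes the terms of `∂σ`.
-/

variable {G A : Type} [Group G] [AddCommGroup A] [DistribMulAction G A]

/-- The action of the transposition `(i,i+1)` (1-indexed `i = j+1`) on `C^n(G,A)`. -/
def Tact (n : ℕ) (j : Fin n) (σ : (Fin n → G) → A) : (Fin n → G) → A :=
  fun g =>
    let g' : Fin n → G := fun i =>
      if (i : ℕ) + 1 = (j : ℕ) then g i * g j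
      else if i = j then (g j)⁻¹
      else if (i : ℕ) = (j : ℕ) + 1 then g j * g i
      else g i
    if (j : ℕ) = 0 then -(g j • σ g') else -(σ g')

/-- The standard cosimplicial face maps `d^j : C^n(G,A) → C^{n+1}(G,A)`. -/
def dmap (n : ℕ) (j : Fin (n + 2)) (σ : (Fin n → G) → A) : (Fin (n + 1) → G) → A :=
  fun g =>
    if (j : ℕ) = 0 then g 0 • σ (fun i => g i.succ)
    else if (j : ℕ) = n + 1 then σ (fun i => g i.castSucc)
    else σ (fun i =>
      if (i : ℕ) + 1 < (j : ℕ) then g i.castSucc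
      else if (i : ℕ) + 1 = (j : ℕ) then g i.castSucc * g i.succ
      else g i.succ)

/-- The group cohomology differential `∂ₙ = Σ_{j=0}^{n+1} (-1)ʲ dʲ`, i.e.
`∂ₙ(σ)(g₁,…,g_{n+1}) = g₁σ(g₂,…,g_{n+1}) - σ(g₁g₂,g₃,…,g_{n+1}) + ⋯
  + (-1)ⁿ σ(g₁,…,gₙg_{n+1}) + (-1)^{n+1} σ(g₁,…,gₙ)`. -/
def diff (n : ℕ) (σ : (Fin n → G) → A) : (Fin (n + 1) → G) → A :=
  fun g => ∑ j : Fin (n + 2), ((-1 : ℤ) ^ (j : ℕ)) • dmap n j σ g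

lemma Tact_sum_zsmul {n : ℕ} {ι : Type*} (j : Fin n) (s : Finset ι) (c : ι → ℤ)
    (τ : ι → (Fin n → G) → A) :
    Tact n j (∑ i ∈ s, c i • τ i) = ∑ i ∈ s, c i • Tact n j (τ i) := by
  funext g
  by_cases hj : (j : ℕ) = 0 <;>
    simp [Tact, hj, Finset.sum_apply, Finset.smul_sum, smul_comm (g j)]

lemma diff_eq_sum (n : ℕ) (σ : (Fin n → G) → A) :
    diff n σ = ∑ k : Fin (n + 2), (-1 : ℤ) ^ (k : ℕ) • dmap n k σ := by
  funext g
  simp [diff, Finset.sum_apply]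

/-- Rewriting a tuple `g` as `f ∘ Fin.val` turns index bookkeeping into arithmetic on `ℕ`. -/
lemma Fin.exists_fun_nat_eq {α : Type*} {n : ℕ} (g : Fin (n + 1) → α) :
    ∃ f : ℕ → α, g = fun i : Fin (n + 1) => f i :=
  ⟨fun k => g (Fin.ofNat (n + 1) k), funext fun i => by simp⟩

/- Deciding the index conditions that do not involve the bound variable by `omega` first keeps
the subsequent case split small. -/
lemma Tact_dmap_castSucc (n : ℕ) (j : Fin (n + 1)) (σ : (Fin n → G) → A) :
    Tact (n + 1) j (dmap n j.castSucc σ) = -dmap n j.succ σ := by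
  funext g
  obtain ⟨f, rfl⟩ := Fin.exists_fun_nat_eq g
  simp only [Tact, dmap, Fin.ext_iff, Fin.val_succ, Fin.val_castSucc, Fin.val_zero, Pi.neg_apply]
  simp (disch := omega) only [if_pos, if_neg]
  split_ifs
  all_goals simp only [neg_inj, smul_inv_smul, mul_inv_cancel_right]
  all_goals grind

lemma Tact_dmap_succ (n : ℕ) (j : Fin (n + 1)) (σ : (Fin n → G) → A) :
    Tact (n + 1) j (dmap n j.succ σ) = -dmap n j.castSucc σ := by
  funext g
  obtain ⟨f, rfl⟩ := Fin.exists_fun_nat_eq g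
  simp only [Tact, dmap, Fin.ext_iff, Fin.val_succ, Fin.val_castSucc, Fin.val_zero, Pi.neg_apply]
  simp (disch := omega) only [if_pos, if_neg]
  split_ifs
  all_goals simp only [neg_inj, inv_mul_cancel_left]
  all_goals grind

lemma Tact_succ_dmap_of_le (n : ℕ) (j : Fin n) (k : Fin (n + 2)) (hk : (k : ℕ) ≤ j)
    (σ : (Fin n → G) → A) :
    Tact (n + 1) j.succ (dmap n k σ) = dmap n k (Tact n j σ) := by
  funext g
  obtain ⟨f, rfl⟩ := Fin.exists_fun_nat_eq g
  simp only [Tact, dmap, Fin.ext_iff, Fin.val_succ, Fin.val_castSucc, Fin.val_zero]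
  simp (disch := omega) only [if_pos, if_neg]
  split_ifs <;> first | contradiction | omega | skip
  all_goals simp only [mul_smul, smul_neg, neg_inj]
  all_goals grind

lemma Tact_castSucc_dmap_of_lt (n : ℕ) (j : Fin n) (k : Fin (n + 2)) (hk : (j : ℕ) + 1 < k)
    (σ : (Fin n → G) → A) :
    Tact (n + 1) j.castSucc (dmap n k σ) = dmap n k (Tact n j σ) := by
  funext g
  obtain ⟨f, rfl⟩ := Fin.exists_fun_nat_eq g
  simp only [Tact, dmap, Fin.ext_iff, Fin.val_succ, Fin.val_castSucc, Fin.val_zero]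
  simp (disch := omega) only [if_pos, if_neg]
  split_ifs
  all_goals simp only [neg_inj]
  all_goals grind

lemma zsmul_Tact_dmap_of_forall_Tact_eq {n : ℕ} {σ : (Fin n → G) → A}
    (hσ : ∀ i : Fin n, Tact n i σ = σ) (j : Fin (n + 1)) (k : Fin (n + 2)) :
    (-1 : ℤ) ^ (k : ℕ) • Tact (n + 1) j (dmap n k σ) =
      (-1 : ℤ) ^ (Equiv.swap j.castSucc j.succ k : ℕ) •
        dmap n (Equiv.swap j.castSucc j.succ k) σ := by
  have swap_apply_of_lt_or_lt (m : Fin (n + 2)) (hm : (m : ℕ) < j ∨ (j : ℕ) + 1 < m) :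
      Equiv.swap j.castSucc j.succ m = m :=
    Equiv.swap_apply_of_ne_of_ne (by rintro rfl; simp at hm) (by rintro rfl; simp at hm)
  rcases lt_trichotomy (k : ℕ) j with hkj | hkj | hkj
  · rw [swap_apply_of_lt_or_lt k (.inl hkj)]
    obtain ⟨j', rfl⟩ := (Fin.exists_succ_eq (x := j)).mpr (by rintro rfl; simp at hkj)
    rw [Tact_succ_dmap_of_le n j' k (Nat.le_of_lt_succ hkj), hσ]
  · obtain rfl : k = j.castSucc := Fin.ext hkj
    rw [Equiv.swap_apply_left, Tact_dmap_castSucc, Fin.val_succ, Fin.val_castSucc, pow_succ,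
      smul_neg, mul_neg_one, neg_smul]
  · rcases (Nat.succ_le_of_lt hkj).eq_or_lt with hkj' | hkj'
    · obtain rfl : k = j.succ := Fin.ext hkj'.symm
      rw [Equiv.swap_apply_right, Tact_dmap_succ, Fin.val_succ, Fin.val_castSucc, pow_succ,
        smul_neg, mul_neg_one, neg_smul, neg_neg]
    · rw [swap_apply_of_lt_or_lt k (.inr hkj')]
      obtain ⟨j', rfl⟩ := (Fin.exists_castSucc_eq (i := j)).mpr fun hj => by
        rw [hj, Fin.val_last] at hkj'
        omega
      rw [Tact_castSucc_dmap_of_lt n j' k hkj', hσ]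

theorem differential_preserves_symmetric_cochains (n : ℕ) (σ : (Fin n → G) → A)
    (hσ : ∀ i : Fin n, Tact n i σ = σ) :
    ∀ i : Fin (n + 1), Tact (n + 1) i (diff n σ) = diff n σ := by
  intro j
  rw [diff_eq_sum, Tact_sum_zsmul]
  simp only [zsmul_Tact_dmap_of_forall_Tact_eq hσ j]
  exact Equiv.sum_comp (Equiv.swap j.castSucc j.succ) fun k => (-1 : ℤ) ^ (k : ℕ) • dmap n k σ
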